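/- arXiv:2501.02828 — 3 statements merged into one kernel-verified Lean document; each statement's English description precedes it below -/
import Mathlib

section
/- Let R be a ring and V a right R-module of type FP_∞ (admitting a projective resolution by finitely generated projectives). If I_λ is an injective right R-module for each λ in an index set Λ, then Ext^i_R(V, ⊕_λ I_λ) = 0 for all i > 0. -/
/-!
Compute `Ext` with a resolution `P` by finitely generated projectives. A cocycle
`P (n + 1) ⟶ ⨁ l, I l` vanishes on the image of `P (n + 2)`, which by exactness is the kernel of
`d : P (n + 1) ⟶ P n`. As `P (n + 1)` is finitely generated, the cocycle lands in a finite
subsum `⨁ l ∈ S, I l = ∀ l : S, I l`, which is injective; so it extends along the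
embedding `P (n + 1) ⧸ ker d ↪ P n`, i.e. it is a coboundary.
-/

open CategoryTheory

/-- A module is of type FP_∞ if it admits a projective resolution all of whose
terms are finitely generated. -/
def ModuleCat.IsFPInfinity {R : Type} [Ring R] (M : ModuleCat R) : Prop :=
  ∃ P : CategoryTheory.ProjectiveResolution M, ∀ n : ℕ, Module.Finite R (P.complex.X n)

universe u v

open DirectSum Limits

section

variable {A : Type u} [Ring A] {B C : Type v} [AddCommGroup B] [AddCommGroup C]
  [Module A B] [Module A C]

theorem Module.Injective.exists_comp_eq_of_ker_le {J : Type v} [AddCommGroup J] [Module A J]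
    [Module.Injective A J] (v : B →ₗ[A] C) (f : B →ₗ[A] J)
    (hker : LinearMap.ker v ≤ LinearMap.ker f) : ∃ g : C →ₗ[A] J, g ∘ₗ v = f := by
  obtain ⟨g, hg⟩ := Module.Injective.out (LinearMap.range v).subtype
    (Submodule.injective_subtype _) ((LinearMap.ker v).liftQ f hker ∘ₗ v.quotKerEquivRange.symm)
  refine ⟨g, LinearMap.ext fun b => ?_⟩
  simpa [LinearMap.quotKerEquivRange_symm_apply_image] using hg ⟨v b, LinearMap.mem_range_self v b⟩

theorem DirectSum.exists_finset_forall_notMem_apply_eq_zero [Module.Finite A B] {Λ : Type*}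
    {I : Λ → Type*} [∀ l, AddCommGroup (I l)] [∀ l, Module A (I l)] (f : B →ₗ[A] ⨁ l, I l) :
    ∃ S : Finset Λ, ∀ b, ∀ l ∉ S, f b l = 0 := by
  classical
  obtain ⟨s, hs⟩ := Module.Finite.fg_top (R := A) (M := B)
  refine ⟨s.sup fun b => (f b).support, fun b l hl => ?_⟩
  have : DFinsupp.lapply l ∘ₗ f = 0 := LinearMap.ext_on hs fun b hb =>
    DFinsupp.notMem_support_iff.1 fun h => hl (Finset.mem_sup.2 ⟨b, hb, h⟩)
  exact LinearMap.congr_fun this b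

theorem DirectSum.exists_comp_eq_of_ker_le [Small.{v} A] [Module.Finite A B] {Λ : Type v}
    {I : Λ → Type v} [∀ l, AddCommGroup (I l)] [∀ l, Module A (I l)]
    [∀ l, Module.Injective A (I l)] (v : B →ₗ[A] C) (f : B →ₗ[A] ⨁ l, I l)
    (hker : LinearMap.ker v ≤ LinearMap.ker f) : ∃ g : C →ₗ[A] ⨁ l, I l, g ∘ₗ v = f := by
  classical
  obtain ⟨S, hS⟩ := exists_finset_forall_notMem_apply_eq_zero f
  let fS := (LinearMap.pi fun l : (S : Set Λ) => DFinsupp.lapply (M := I) (R := A) l.1) ∘ₗ f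
  have hfS : lmk A Λ I S ∘ₗ fS = f := LinearMap.ext fun b => DFinsupp.ext fun l => by
    change DFinsupp.mk S (fS b) l = f b l
    rw [DFinsupp.mk_apply]
    split_ifs with hl
    exacts [rfl, (hS b l hl).symm]
  obtain ⟨g, hg⟩ := Module.Injective.exists_comp_eq_of_ker_le v fS
    (hker.trans (LinearMap.ker_le_ker_comp f _))
  exact ⟨lmk A Λ I S ∘ₗ g, by rw [LinearMap.comp_assoc, hg, hfS]⟩

theorem ChainComplex.isZero_homology_succ_linearYonedaObj_directSum [Small.{v} A]
    (P : ChainComplex (ModuleCat.{v} A) ℕ) (n : ℕ) (hP : P.ExactAt (n + 1))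
    [Module.Finite A (P.X (n + 1))] {Λ : Type v} (I : Λ → Type v) [∀ l, AddCommGroup (I l)]
    [∀ l, Module A (I l)] [∀ l, Module.Injective A (I l)] :
    IsZero ((P.linearYonedaObj ℤ (ModuleCat.of A (⨁ l, I l))).homology (n + 1)) := by
  rw [← HomologicalComplex.exactAt_iff_isZero_homology,
    HomologicalComplex.exactAt_iff' _ n (n + 1) (n + 2) (by simp) (by simp),
    ShortComplex.moduleCat_exact_iff]
  rw [HomologicalComplex.exactAt_iff' _ (n + 2) (n + 1) n (by simp) (by simp),
    ShortComplex.moduleCat_exact_iff] at hP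
  intro x hx
  obtain ⟨g, hg⟩ := DirectSum.exists_comp_eq_of_ker_le (P.d (n + 1) n).hom x.hom fun b hb => by
    obtain ⟨y, rfl⟩ := hP b hb
    have hdx : P.d (n + 2) (n + 1) ≫ x = 0 := hx
    exact congr(($hdx).hom y)
  exact ⟨ModuleCat.ofHom g, ModuleCat.hom_ext hg⟩

end

theorem ext_directSum_injective_eq_zero
    (R : Type) [Ring R]
    (V : Type) [AddCommGroup V] [Module Rᵐᵒᵖ V]
    (hV : ModuleCat.IsFPInfinity (ModuleCat.of Rᵐᵒᵖ V))
    (Λ : Type) (I : Λ → Type)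
    [∀ l, AddCommGroup (I l)] [∀ l, Module Rᵐᵒᵖ (I l)]
    (hinj : ∀ l, Module.Injective Rᵐᵒᵖ (I l))
    (i : ℕ) (hi : 0 < i) :
    Subsingleton
      (((Ext ℤ (ModuleCat Rᵐᵒᵖ) i).obj
          (Opposite.op (ModuleCat.of Rᵐᵒᵖ V))).obj
        (ModuleCat.of Rᵐᵒᵖ (DirectSum Λ (fun l => I l)))) := by
  obtain ⟨P, hfin⟩ := hV
  obtain ⟨n, rfl⟩ := Nat.exists_eq_add_one_of_ne_zero hi.ne'
  have := hfin (n + 1)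
  rw [← ModuleCat.isZero_iff_subsingleton]
  exact (P.complex.isZero_homology_succ_linearYonedaObj_directSum n (P.complex_exactAt_succ n)
    I).of_iso (P.isoExt (n + 1) _)
end

section
/- Let R be a ring and M a left R-module. If for every direct system {N_i} of left R-modules with colim N_i = 0 one has colim Hom_R(M, N_i) = 0, then M is finitely generated. -/
/-!
STATEMENT 2: Let R be a ring and M a left R-module.  If for every direct system
{N_i} of left R-modules with colim N_i = 0 one has colim Hom_R(M, N_i) = 0,
then M is finitely generated.

The direct system of abelian groups `Hom_R(M, N_i)` is obtained by applying
`Hom_R(M, -)` termwise (its transition maps are postcomposition with the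
transition maps of the system `{N_i}`); its direct limit is taken as a direct
limit of ℤ-modules.
-/

/-- Postcomposition with an `R`-linear map, as a `ℤ`-linear map between Hom
groups. -/
def homPostcomp (R : Type) [Ring R] (M : Type) [AddCommGroup M] [Module R M]
    {A B : Type} [AddCommGroup A] [Module R A] [AddCommGroup B] [Module R B]
    (g : A →ₗ[R] B) : (M →ₗ[R] A) →ₗ[ℤ] (M →ₗ[R] B) where
  toFun φ := g.comp φ
  map_add' a b := LinearMap.ext fun x => by simp
  map_smul' z a := LinearMap.ext fun x => by simp

theorem finite_of_hom_directLimit_vanishing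
    (R : Type) [Ring R] (M : Type) [AddCommGroup M] [Module R M]
    (h : ∀ (ι : Type) [Preorder ι] [IsDirected ι (· ≤ ·)] [Nonempty ι] [DecidableEq ι]
      (N : ι → Type) [∀ i, AddCommGroup (N i)] [∀ i, Module R (N i)]
      (f : ∀ i j, i ≤ j → N i →ₗ[R] N j) [DirectedSystem N (fun i j hij => f i j hij)],
      Subsingleton (Module.DirectLimit N f) →
      Subsingleton (Module.DirectLimit (fun i => M →ₗ[R] N i)
        (fun i j hij => homPostcomp R M (f i j hij)))) :
    Module.Finite R M := by
  classical
  -- index: finite subsets of M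
  set ι := Finset M with hι
  let sp : ι → Submodule R M := fun S => Submodule.span R (S : Set M)
  let N : ι → Type := fun S => M ⧸ sp S
  let f : ∀ i j : ι, i ≤ j → N i →ₗ[R] N j := fun i j hij =>
    Submodule.mapQ (sp i) (sp j) LinearMap.id
      (by simpa using Submodule.span_mono (by exact_mod_cast hij))
  have ffact : ∀ (i j : ι) (hij : i ≤ j) (x : M),
      f i j hij (Submodule.Quotient.mk x) = Submodule.Quotient.mk x := fun i j hij x => by
    rw [Submodule.mapQ_apply]; rfl
  haveI : DirectedSystem N (fun i j hij => f i j hij) := by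
    constructor
    · intro i x
      obtain ⟨y, rfl⟩ := Submodule.Quotient.mk_surjective _ x
      exact ffact i i le_rfl y
    · intro i j k hij hjk x
      obtain ⟨y, rfl⟩ := Submodule.Quotient.mk_surjective _ x
      rw [ffact k j hij y, ffact j i hjk y, ffact k i (hij.trans hjk) y]
  have hsub : Subsingleton (Module.DirectLimit N f) := by
    constructor
    intro a b
    have hz : ∀ c : Module.DirectLimit N f, c = 0 := by
      intro c
      induction c using Module.DirectLimit.induction_on with
      | ih i x =>
        obtain ⟨y, rfl⟩ := Submodule.Quotient.mk_surjective _ x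
        have hle : i ≤ insert y i := Finset.subset_insert y i
        rw [← Module.DirectLimit.of_f (hij := hle), ffact i (insert y i) hle y]
        have hy : (Submodule.Quotient.mk y : N (insert y i)) = 0 := by
          rw [Submodule.Quotient.mk_eq_zero]
          exact Submodule.subset_span (Finset.mem_coe.2 (Finset.mem_insert_self y i))
        rw [hy, map_zero]
    rw [hz a, hz b]
  haveI : DirectedSystem (fun i => M →ₗ[R] N i)
      (fun i j hij => homPostcomp R M (f i j hij)) := by
    constructor
    · intro i φ
      refine LinearMap.ext fun x => ?_
      exact DirectedSystem.map_self (f := fun i j hij => (f i j hij : N i → N j)) (φ x)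
    · intro i j k hij hjk φ
      refine LinearMap.ext fun x => ?_
      exact DirectedSystem.map_map (f := fun i j hij => (f i j hij : N i → N j)) hij hjk (φ x)
  haveI := h ι N f hsub
  -- the compatible family of quotient maps
  have key : Module.DirectLimit.of ℤ ι (fun i => M →ₗ[R] N i)
      (fun i j hij => homPostcomp R M (f i j hij)) (∅ : ι) ((sp ∅).mkQ) = 0 :=
    Subsingleton.elim _ _
  obtain ⟨j, hij, hj⟩ := Module.DirectLimit.of.zero_exact key
  have hπ : ((sp j).mkQ : M →ₗ[R] N j) = 0 := by
    have : ∀ x : M, homPostcomp R M (f ∅ j hij) ((sp ∅).mkQ) x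
        = (sp j).mkQ x := fun x => by
      show f ∅ j hij ((sp ∅).mkQ x) = (sp j).mkQ x
      exact ffact ∅ j hij x
    ext x
    rw [← this x, hj]
  have hspan : sp j = ⊤ := by
    rw [Submodule.eq_top_iff']
    intro x
    have h2 : (sp j).mkQ x = 0 := congrFun (congrArg (fun g : M →ₗ[R] N j => (g : M → N j)) hπ) x
    rw [Submodule.mkQ_apply, Submodule.Quotient.mk_eq_zero] at h2
    exact h2
  exact ⟨⟨j, hspan⟩⟩
end

section
/- Let A ⊆ B be an H-Galois extension with translation map κ. Then for all h, k ∈ H, κ(hk) = Σ κ¹(k)κ¹(h) ⊗_A κ²(h)κ²(k), i.e., κ is an anti-multiplicative map with respect to the factorwise multiplication on B ⊗_A B. -/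
/-!
STATEMENT 12: Let A ⊆ B be an H-Galois extension with translation map κ.  Then
for all h, k ∈ H, κ(hk) = Σ κ¹(k)κ¹(h) ⊗_A κ²(h)κ²(k); i.e. κ is
anti-multiplicative with respect to the factorwise multiplication on B ⊗_A B.

As in STATEMENT 11, `B ⊗_A B` is encoded as the quotient of `B ⊗_k B` by the
span of the A-balancing relations, and the Galois condition says the k-linear
Galois map β' : B ⊗_k B → B ⊗ H is surjective with kernel exactly that span.
The translation map values are (classes of) lifts of `1 ⊗ h` along β', and the
claimed identity is an equality in the quotient `B ⊗_A B`.
-/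

open TensorProduct

variable (k H B : Type) [Field k] [Ring H] [HopfAlgebra k H] [Ring B] [Algebra k B]

/-- The Galois map `B ⊗_k B → B ⊗_k H`, `b' ⊗ b ↦ b'·ρ(b)`. -/
noncomputable def galoisMap (ρ : B →ₐ[k] B ⊗[k] H) : B ⊗[k] B →ₗ[k] B ⊗[k] H :=
  TensorProduct.lift
    (((LinearMap.mul k (B ⊗[k] H)).comp
        (Algebra.TensorProduct.includeLeft : B →ₐ[k] B ⊗[k] H).toLinearMap).compl₂
      ρ.toLinearMap)

/-- The coinvariant subalgebra `B^{coH}`, as a subset of `B`. -/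
def coinvariants (ρ : B →ₐ[k] B ⊗[k] H) : Set B :=
  {b : B | ρ b = b ⊗ₜ[k] (1 : H)}

/-- The `A`-balancing relations inside `B ⊗_k B`, where `A = B^{coH}`. -/
def balancingRelations (ρ : B →ₐ[k] B ⊗[k] H) : Submodule k (B ⊗[k] B) :=
  Submodule.span k
    {x : B ⊗[k] B | ∃ b b' a : B, a ∈ coinvariants k H B ρ ∧
      x = (b * a) ⊗ₜ[k] b' - b ⊗ₜ[k] (a * b')}

/-- The twisted product on `B ⊗_k B`:
for `x = Σ x¹ ⊗ x²` and `y = Σ y¹ ⊗ y²` it is `Σ y¹x¹ ⊗ x²y²`. -/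
noncomputable def twistedProduct (x y : B ⊗[k] B) : B ⊗[k] B :=
  (TensorProduct.map (LinearMap.mul' k B)
      ((LinearMap.mul' k B).comp (TensorProduct.comm k B B).toLinearMap))
    ((TensorProduct.tensorTensorTensorComm k B B B B) (y ⊗ₜ[k] x))

lemma galoisMap_tmul (ρ : B →ₐ[k] B ⊗[k] H) (b' b : B) :
    galoisMap k H B ρ (b' ⊗ₜ[k] b) = (b' ⊗ₜ[k] (1 : H)) * ρ b := by
  simp [galoisMap, Algebra.TensorProduct.includeLeft_apply]

lemma twistedProduct_tmul (x1 x2 y1 y2 : B) :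
    twistedProduct k B (x1 ⊗ₜ[k] x2) (y1 ⊗ₜ[k] y2) = (y1 * x1) ⊗ₜ[k] (x2 * y2) := by
  simp [twistedProduct]

lemma twistedProduct_add_right (x y y' : B ⊗[k] B) :
    twistedProduct k B x (y + y') = twistedProduct k B x y + twistedProduct k B x y' := by
  simp [twistedProduct, add_tmul]

lemma twistedProduct_smul_right (c : k) (x y : B ⊗[k] B) :
    twistedProduct k B x (c • y) = c • twistedProduct k B x y := by
  unfold twistedProduct
  rw [← smul_tmul', map_smul, map_smul]

lemma twistedProduct_add_left (x x' y : B ⊗[k] B) :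
    twistedProduct k B (x + x') y = twistedProduct k B x y + twistedProduct k B x' y := by
  simp [twistedProduct, tmul_add]

lemma twistedProduct_smul_left (c : k) (x y : B ⊗[k] B) :
    twistedProduct k B (c • x) y = c • twistedProduct k B x y := by
  simp [twistedProduct, tmul_smul]

lemma galoisMap_tp_pure (ρ : B →ₐ[k] B ⊗[k] H) (x : B ⊗[k] B) (y1 y2 : B) :
    galoisMap k H B ρ (twistedProduct k B x (y1 ⊗ₜ[k] y2)) =
      (y1 ⊗ₜ[k] (1 : H)) * galoisMap k H B ρ x * ρ y2 := by
  induction x using TensorProduct.induction_on with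
  | zero => simp [twistedProduct]
  | tmul x1 x2 =>
      rw [twistedProduct_tmul, galoisMap_tmul, galoisMap_tmul, map_mul]
      rw [show (y1 * x1) ⊗ₜ[k] (1 : H) = (y1 ⊗ₜ[k] (1 : H)) * (x1 ⊗ₜ[k] (1 : H)) by
        simp [Algebra.TensorProduct.tmul_mul_tmul]]
      noncomm_ring
  | add a b ha hb =>
      rw [twistedProduct_add_left, map_add, map_add, ha, hb]
      noncomm_ring

lemma lTensor_mulLeft_aux (y1 : B) (h : H) (v : B ⊗[k] H) :
    (y1 ⊗ₜ[k] (1 : H)) * ((1 : B) ⊗ₜ[k] h) * v =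
      LinearMap.lTensor B (LinearMap.mulLeft k h) ((y1 ⊗ₜ[k] (1 : H)) * v) := by
  induction v using TensorProduct.induction_on with
  | zero => simp
  | tmul b t => simp [Algebra.TensorProduct.tmul_mul_tmul]
  | add a b ha hb => simp only [mul_add, map_add, ha, hb]

lemma galoisMap_twisted (ρ : B →ₐ[k] B ⊗[k] H) (h : H) (x y : B ⊗[k] B)
    (hx : galoisMap k H B ρ x = (1 : B) ⊗ₜ[k] h) :
    galoisMap k H B ρ (twistedProduct k B x y) =
      LinearMap.lTensor B (LinearMap.mulLeft k h) (galoisMap k H B ρ y) := by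
  induction y using TensorProduct.induction_on with
  | zero => simp [twistedProduct]
  | tmul y1 y2 =>
      rw [galoisMap_tp_pure, hx, galoisMap_tmul, lTensor_mulLeft_aux]
  | add a b ha hb =>
      rw [twistedProduct_add_right, map_add, ha, hb, map_add, map_add]

theorem translation_map_anti_multiplicative
    (ρ : B →ₐ[k] B ⊗[k] H)
    (hcoassoc : (TensorProduct.assoc k B H H).toLinearMap ∘ₗ
        (LinearMap.rTensor H ρ.toLinearMap) ∘ₗ ρ.toLinearMap =
      (LinearMap.lTensor B (Coalgebra.comul (R := k) (A := H))) ∘ₗ ρ.toLinearMap)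
    (hcounit : (TensorProduct.rid k B).toLinearMap ∘ₗ
        (LinearMap.lTensor B (Coalgebra.counit (R := k) (A := H))) ∘ₗ ρ.toLinearMap =
      LinearMap.id)
    (hsurj : Function.Surjective (galoisMap k H B ρ))
    (hker : LinearMap.ker (galoisMap k H B ρ) = balancingRelations k H B ρ) :
    ∀ (h h' : H) (x y w : B ⊗[k] B),
      galoisMap k H B ρ x = (1 : B) ⊗ₜ[k] h →
      galoisMap k H B ρ y = (1 : B) ⊗ₜ[k] h' →
      galoisMap k H B ρ w = (1 : B) ⊗ₜ[k] (h * h') →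
      Submodule.Quotient.mk (p := balancingRelations k H B ρ) (twistedProduct k B x y) =
        Submodule.Quotient.mk w := by
  intro h h' x y w hx hy hw
  have key : galoisMap k H B ρ (twistedProduct k B x y) = (1 : B) ⊗ₜ[k] (h * h') := by
    rw [galoisMap_twisted k H B ρ h x y hx, hy]
    simp
  rw [Submodule.Quotient.eq, ← hker, LinearMap.mem_ker, map_sub, key, hw, sub_self]
end
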